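/- Let G be a group with a finite generating set X. If (G,X) has the basepoint loop shortening property, then (G,X) is almost convex. -/

import Mathlib

/-! Basic notions for a group `G` with a generating set `X`:
words over `X ∪ X⁻¹`, the word metric, paths, loops and fellow traveling. -/

namespace LoopShortening

variable {G : Type*} [Group G]

/-- `w` is a word over `X ∪ X⁻¹`: every letter of `w` lies in `X ∪ X⁻¹`. -/
def IsWord (X : Set G) (w : List G) : Prop := ∀ x ∈ w, x ∈ X ∨ x⁻¹ ∈ X

/-- The word metric with respect to `X`: `wdist X g h` is the least `n` such that
`g⁻¹h` is a product of `n` elements of `X ∪ X⁻¹`. -/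
noncomputable def wdist (X : Set G) (g h : G) : ℕ :=
  sInf {n : ℕ | ∃ l : List G, IsWord X l ∧ l.length = n ∧ g * l.prod = h}

/-- The point at time `t ∈ ℕ` along the path based at `g₀` labelled by the word `w`;
for `t ≥ |w|` this is the endpoint of the path. -/
def pathAt (g₀ : G) (w : List G) (t : ℕ) : G := g₀ * (w.take t).prod

/-- The word `w` labels a loop (its evaluation in `G` is the identity, so the
path it labels ends where it starts). -/
def IsLoop (w : List G) : Prop := w.prod = 1

/-- The paths based at `g₀` and `h₀` labelled by `w` and `u` synchronously
`k`-fellow travel. -/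
def SyncFellow (X : Set G) (k : ℕ) (g₀ : G) (w : List G) (h₀ : G) (u : List G) : Prop :=
  ∀ t : ℕ, wdist X (pathAt g₀ w t) (pathAt h₀ u t) ≤ k

/-- The paths based at `g₀` and `h₀` labelled by `w` and `u` asynchronously
`k`-fellow travel: there is a nondecreasing unbounded reparameterization `φ`. -/
def AsyncFellow (X : Set G) (k : ℕ) (g₀ : G) (w : List G) (h₀ : G) (u : List G) : Prop :=
  ∃ φ : ℕ → ℕ, Monotone φ ∧ (∀ m : ℕ, ∃ t : ℕ, m ≤ φ t) ∧
    ∀ t : ℕ, wdist X (pathAt g₀ w t) (pathAt h₀ u (φ t)) ≤ k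

/-- `(G,X)` has the (synchronous) basepoint loop shortening property. -/
def BasepointLSP (X : Set G) : Prop :=
  ∃ k : ℕ, 0 < k ∧ ∀ (g₀ : G) (w : List G), IsWord X w → IsLoop w → w ≠ [] →
    ∃ u : List G, IsWord X u ∧ IsLoop u ∧ u.length < w.length ∧
      SyncFellow X k g₀ w g₀ u

/-- `(G,X)` is almost convex: there is a constant `C` such that for every `N ∈ ℕ` and
all `g, h ∈ G` with `d(1,g) ≤ N`, `d(1,h) ≤ N` and `d(g,h) ≤ 2`, there is a path from
`g` to `h` of length at most `C` each of whose vertices lies within distance `N` of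
the identity. -/
def AlmostConvex (X : Set G) : Prop :=
  ∃ C : ℕ, ∀ (N : ℕ) (g h : G), wdist X 1 g ≤ N → wdist X 1 h ≤ N → wdist X g h ≤ 2 →
    ∃ p : List G, IsWord X p ∧ g * p.prod = h ∧ p.length ≤ C ∧
      ∀ t : ℕ, wdist X 1 (pathAt g p t) ≤ N


/-! Given `g, h` in the ball of radius `N` with `d(g,h) ≤ 2`, close geodesics `1 → g → h → 1`
into a loop `w` of length at most `2N + 2` and shorten it once to a loop `u` that `k`-fellow
travels `w`. Since `|u| ≤ 2N + 1` and `u` is based at `1`, all of `u` lies in the ball. The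
detour from `g` to `h` backs up `k` steps along the geodesic to `g`, hops over to `u`, follows
`u` for at most `2 + 2k` steps, hops back to `w` and climbs `k` steps to `h`: `6k + 2` steps in
all. The hops stay in the ball because they happen where `w` and `u` are at depth `≤ N - k`,
or where both are at `1`. -/

section WordMetric

variable {X : Set G}

lemma isWord_nil : IsWord X ([] : List G) := fun _ hx => absurd hx List.not_mem_nil

lemma IsWord.append {p q : List G} (hp : IsWord X p) (hq : IsWord X q) : IsWord X (p ++ q) :=
  fun x hx => (List.mem_append.mp hx).elim (hp x) (hq x)

lemma IsWord.take {p : List G} (hp : IsWord X p) (n : ℕ) : IsWord X (p.take n) :=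
  fun x hx => hp x (List.mem_of_mem_take hx)

lemma IsWord.drop {p : List G} (hp : IsWord X p) (n : ℕ) : IsWord X (p.drop n) :=
  fun x hx => hp x (List.mem_of_mem_drop hx)

lemma IsWord.reverse_map_inv {p : List G} (hp : IsWord X p) :
    IsWord X (p.map (·⁻¹)).reverse := by
  intro x hx
  obtain ⟨y, hy, rfl⟩ := List.mem_map.mp (List.mem_reverse.mp hx)
  simpa [or_comm] using hp y hy

lemma exists_isWord_prod_eq (hgen : Subgroup.closure X = ⊤) (z : G) :
    ∃ l : List G, IsWord X l ∧ l.prod = z := by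
  have hz : z ∈ Subgroup.closure X := hgen ▸ Subgroup.mem_top z
  induction hz using Subgroup.closure_induction with
  | mem x hx => exact ⟨[x], by simpa [IsWord] using Or.inl hx, List.prod_singleton⟩
  | one => exact ⟨[], isWord_nil, List.prod_nil⟩
  | mul x y _ _ ihx ihy =>
    obtain ⟨l₁, hl₁, rfl⟩ := ihx
    obtain ⟨l₂, hl₂, rfl⟩ := ihy
    exact ⟨l₁ ++ l₂, hl₁.append hl₂, List.prod_append⟩
  | inv x _ ih =>
    obtain ⟨l, hl, rfl⟩ := ih
    exact ⟨(l.map (·⁻¹)).reverse, hl.reverse_map_inv, (List.prod_inv_reverse l).symm⟩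

lemma wdist_le_length {g h : G} {l : List G} (hl : IsWord X l) (he : g * l.prod = h) :
    wdist X g h ≤ l.length :=
  Nat.sInf_le ⟨l, hl, rfl, he⟩

lemma exists_geodesic (hgen : Subgroup.closure X = ⊤) (g h : G) :
    ∃ l : List G, IsWord X l ∧ l.length = wdist X g h ∧ g * l.prod = h := by
  obtain ⟨l, hl, hprod⟩ := exists_isWord_prod_eq hgen (g⁻¹ * h)
  exact Nat.sInf_mem (s := {n | ∃ l : List G, IsWord X l ∧ l.length = n ∧ g * l.prod = h})
    ⟨l.length, l, hl, rfl, by rw [hprod, mul_inv_cancel_left]⟩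

lemma wdist_comm_le (hgen : Subgroup.closure X = ⊤) (g h : G) : wdist X h g ≤ wdist X g h := by
  obtain ⟨l, hl, hlen, he⟩ := exists_geodesic hgen g h
  have he' : h * (l.map (·⁻¹)).reverse.prod = g := by
    rw [← List.prod_inv_reverse, ← he, mul_inv_cancel_right]
  simpa [hlen] using wdist_le_length hl.reverse_map_inv he'

lemma wdist_comm (hgen : Subgroup.closure X = ⊤) (g h : G) : wdist X g h = wdist X h g :=
  le_antisymm (wdist_comm_le hgen h g) (wdist_comm_le hgen g h)

lemma wdist_triangle (hgen : Subgroup.closure X = ⊤) (g h i : G) :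
    wdist X g i ≤ wdist X g h + wdist X h i := by
  obtain ⟨l₁, hl₁, hlen₁, he₁⟩ := exists_geodesic hgen g h
  obtain ⟨l₂, hl₂, hlen₂, he₂⟩ := exists_geodesic hgen h i
  have he : g * (l₁ ++ l₂).prod = i := by rw [List.prod_append, ← mul_assoc, he₁, he₂]
  simpa [hlen₁, hlen₂] using wdist_le_length (hl₁.append hl₂) he

end WordMetric

section Paths

variable {X : Set G}

lemma pathAt_zero (g : G) (w : List G) : pathAt g w 0 = g := by simp [pathAt]

lemma pathAt_of_length_le (g : G) {w : List G} {t : ℕ} (ht : w.length ≤ t) :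
    pathAt g w t = g * w.prod := by
  rw [pathAt, List.take_of_length_le ht]

lemma pathAt_append_length (g : G) (p q : List G) (t : ℕ) :
    pathAt g (p ++ q) (p.length + t) = pathAt (g * p.prod) q t := by
  simp [pathAt, List.take_append, List.take_of_length_le, mul_assoc]

lemma pathAt_drop_take (g : G) (w : List G) (i n t : ℕ) :
    pathAt (pathAt g w i) ((w.drop i).take n) t = pathAt g w (i + min t n) := by
  simp only [pathAt, List.take_take, List.take_add, List.prod_append, mul_assoc]

lemma wdist_pathAt_pathAt_le {w : List G} (hw : IsWord X w) (g : G) {i j : ℕ} (hij : i ≤ j) :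
    wdist X (pathAt g w i) (pathAt g w j) ≤ min (j - i) (w.length - i) := by
  have he := pathAt_drop_take g w i (j - i) (j - i)
  rw [min_self, Nat.add_sub_cancel' hij, pathAt_of_length_le _ (by simp)] at he
  simpa using wdist_le_length ((hw.drop i).take (j - i)) he

lemma wdist_pathAt_le {w : List G} (hw : IsWord X w) (g : G) (t : ℕ) :
    wdist X g (pathAt g w t) ≤ t := by
  simpa [pathAt_zero] using (wdist_pathAt_pathAt_le hw g (Nat.zero_le t)).trans (min_le_left _ _)

lemma wdist_pathAt_prod_le {w : List G} (hw : IsWord X w) (g : G) (t : ℕ) :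
    wdist X (pathAt g w t) (g * w.prod) ≤ w.length - t := by
  rw [← pathAt_of_length_le g (le_max_right t w.length)]
  exact (wdist_pathAt_pathAt_le hw g (le_max_left t w.length)).trans (min_le_right _ _)

lemma wdist_pathAt_le_of_isLoop (hgen : Subgroup.closure X = ⊤) {u : List G} {N : ℕ}
    (hu : IsWord X u) (huloop : IsLoop u) (hlen : u.length ≤ 2 * N + 1) (g : G) (t : ℕ) :
    wdist X g (pathAt g u t) ≤ N := by
  have hstart := wdist_pathAt_le hu g t
  have hend := wdist_pathAt_prod_le hu g t
  rw [huloop, mul_one, wdist_comm hgen] at hend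
  omega

end Paths

section BallPath

variable {X : Set G}

def BallPath (X : Set G) (N : ℕ) (g h : G) (m : ℕ) : Prop :=
  ∃ p : List G, IsWord X p ∧ g * p.prod = h ∧ p.length ≤ m ∧
    ∀ t : ℕ, wdist X 1 (pathAt g p t) ≤ N

lemma BallPath.mono {N m m' : ℕ} {g h : G} (hgh : BallPath X N g h m) (hm : m ≤ m') :
    BallPath X N g h m' :=
  let ⟨p, hp, he, hl, hd⟩ := hgh
  ⟨p, hp, he, hl.trans hm, hd⟩

lemma BallPath.trans {N m₁ m₂ : ℕ} {g h i : G}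
    (hgh : BallPath X N g h m₁) (hhi : BallPath X N h i m₂) : BallPath X N g i (m₁ + m₂) := by
  obtain ⟨p, hp, hep, hlp, hdp⟩ := hgh
  obtain ⟨q, hq, heq, hlq, hdq⟩ := hhi
  refine ⟨p ++ q, hp.append hq, by rw [List.prod_append, ← mul_assoc, hep, heq],
    by rw [List.length_append]; omega, fun t => ?_⟩
  rcases le_or_gt p.length t with hle | hlt
  · obtain ⟨n, rfl⟩ := Nat.exists_eq_add_of_le hle
    rw [pathAt_append_length, hep]
    exact hdq n
  · rw [pathAt, List.take_append_of_le_length hlt.le]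
    exact hdp t

/-- Each vertex `v` of a geodesic from `x` to `y` is within `d(x,y)` of both ends, so
`|v| ≤ min |x| |y| + d(x,y)`. -/
lemma ballPath_of_wdist_le (hgen : Subgroup.closure X = ⊤) {N m : ℕ} {x y : G}
    (hxy : wdist X x y ≤ m) (hN : min (wdist X 1 x) (wdist X 1 y) + m ≤ N) :
    BallPath X N x y m := by
  obtain ⟨p, hp, hlen, he⟩ := exists_geodesic hgen x y
  refine ⟨p, hp, he, hlen ▸ hxy, fun t => ?_⟩
  have hx := wdist_triangle hgen 1 x (pathAt x p t)
  have hy := wdist_triangle hgen 1 y (pathAt x p t)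
  have hxv := (wdist_pathAt_pathAt_le hp x (Nat.zero_le t)).trans (min_le_right _ _)
  have hvy := wdist_pathAt_prod_le hp x t
  rw [pathAt_zero] at hxv
  rw [he, wdist_comm hgen] at hvy
  omega

lemma ballPath_pathAt {N : ℕ} {w : List G} {g : G} (hw : IsWord X w)
    (hball : ∀ t, wdist X 1 (pathAt g w t) ≤ N) {i j : ℕ} (hij : i ≤ j) :
    BallPath X N (pathAt g w i) (pathAt g w j) (j - i) := by
  refine ⟨(w.drop i).take (j - i), (hw.drop i).take (j - i), ?_, by simp, fun t => ?_⟩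
  · have he := pathAt_drop_take g w i (j - i) (j - i)
    rwa [min_self, Nat.add_sub_cancel' hij, pathAt_of_length_le _ (by simp)] at he
  · rw [pathAt_drop_take]
    exact hball _

end BallPath

section Detour

variable {X : Set G} {w u : List G} {k N : ℕ}

lemma ballPath_descend_hop (hgen : Subgroup.closure X = ⊤) (hw : IsWord X w) (hu : IsWord X u)
    (hfel : SyncFellow X k 1 w 1 u) {a : ℕ} (ha : a ≤ N) :
    BallPath X N (pathAt 1 w a) (pathAt 1 u (a - k)) (2 * k) := by
  have hwi := wdist_pathAt_le hw 1 (a - k)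
  have hui := wdist_pathAt_le hu 1 (a - k)
  have hback := wdist_pathAt_pathAt_le hw 1 (Nat.sub_le a k)
  have hhop := hfel (a - k)
  have hvia := wdist_triangle hgen (pathAt 1 w (a - k)) 1 (pathAt 1 u (a - k))
  rw [wdist_comm hgen _ 1] at hvia
  rw [wdist_comm hgen] at hback
  have hdescend := ballPath_of_wdist_le (N := N) hgen hback (by omega)
  exact (hdescend.trans (ballPath_of_wdist_le hgen le_rfl (by omega))).mono (by omega)

lemma ballPath_hop_climb (hgen : Subgroup.closure X = ⊤) (hw : IsWord X w) (hwloop : IsLoop w)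
    (hu : IsWord X u) (huloop : IsLoop u) (hulen : u.length ≤ w.length)
    (hfel : SyncFellow X k 1 w 1 u) {j : ℕ} (hN : w.length - j ≤ N) :
    BallPath X N (pathAt 1 u (j + k)) (pathAt 1 w j) (2 * k) := by
  have hwj := wdist_pathAt_prod_le hw 1 (j + k)
  have huj := wdist_pathAt_prod_le hu 1 (j + k)
  rw [hwloop, mul_one, wdist_comm hgen] at hwj
  rw [huloop, mul_one, wdist_comm hgen] at huj
  have hclimb := wdist_pathAt_pathAt_le hw 1 (Nat.le_add_right j k)
  have hhop := hfel (j + k)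
  have hvia := wdist_triangle hgen (pathAt 1 u (j + k)) 1 (pathAt 1 w (j + k))
  rw [wdist_comm hgen _ 1] at hvia
  rw [wdist_comm hgen] at hclimb hhop
  have hback := ballPath_of_wdist_le (N := N) hgen
    (le_refl (wdist X (pathAt 1 u (j + k)) (pathAt 1 w (j + k)))) (by omega)
  exact (hback.trans (ballPath_of_wdist_le hgen hclimb (by omega))).mono (by omega)

end Detour

lemma exists_geodesic_triangle {X : Set G} (hgen : Subgroup.closure X = ⊤) (g h : G) :
    ∃ w : List G, IsWord X w ∧ IsLoop w ∧
      w.length = wdist X 1 g + wdist X g h + wdist X 1 h ∧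
      pathAt 1 w (wdist X 1 g) = g ∧ pathAt 1 w (wdist X 1 g + wdist X g h) = h := by
  obtain ⟨γ, hγ, hγlen, hγe⟩ := exists_geodesic hgen 1 g
  obtain ⟨β, hβ, hβlen, hβe⟩ := exists_geodesic hgen g h
  obtain ⟨δ, hδ, hδlen, hδe⟩ := exists_geodesic hgen h 1
  rw [one_mul] at hγe
  refine ⟨γ ++ (β ++ δ), hγ.append (hβ.append hδ), ?_, ?_, ?_, ?_⟩
  · rw [IsLoop, List.prod_append, List.prod_append, hγe, ← mul_assoc, hβe, hδe]
  · simp [hγlen, hβlen, hδlen, wdist_comm hgen h 1, add_assoc]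
  · simpa [← hγlen, hγe, pathAt_zero] using pathAt_append_length 1 γ (β ++ δ) 0
  · rw [← hγlen, ← hβlen, pathAt_append_length, one_mul, hγe, ← add_zero β.length,
      pathAt_append_length, hβe, pathAt_zero]

theorem basepointLSP_almostConvex_general {G : Type*} [Group G] (X : Set G)
    (hgen : Subgroup.closure X = ⊤)
    (h : BasepointLSP X) : AlmostConvex X := by
  obtain ⟨k, -, hlsp⟩ := h
  refine ⟨6 * k + 2, fun N g h hg hh hgh => ?_⟩
  show BallPath X N g h (6 * k + 2)
  rcases Nat.eq_zero_or_pos (wdist X g h) with hc | hc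
  · exact (ballPath_of_wdist_le hgen hc.le (by omega)).mono (Nat.zero_le _)
  obtain ⟨w, hw, hwloop, hwlen, hwg, hwh⟩ := exists_geodesic_triangle hgen g h
  obtain ⟨u, hu, huloop, hulen, hfel⟩ :=
    hlsp 1 w hw hwloop (List.ne_nil_of_length_pos (by omega))
  have hball (t : ℕ) : wdist X 1 (pathAt 1 u t) ≤ N :=
    wdist_pathAt_le_of_isLoop (N := N) hgen hu huloop (by omega) 1 t
  have hleft := ballPath_descend_hop hgen hw hu hfel hg
  rw [hwg] at hleft
  have hmid := ballPath_pathAt hu hball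
    (i := wdist X 1 g - k) (j := wdist X 1 g + wdist X g h + k) (by omega)
  have hright := ballPath_hop_climb (N := N) hgen hw hwloop hu huloop hulen.le hfel
    (j := wdist X 1 g + wdist X g h) (by omega)
  rw [hwh] at hright
  exact ((hleft.trans hmid).trans hright).mono (by omega)

/-- If `(G,X)` has the basepoint loop shortening property then `(G,X)` is
almost convex. -/
theorem basepointLSP_almostConvex {G : Type*} [Group G] (X : Set G)
    (hfin : X.Finite) (hgen : Subgroup.closure X = ⊤)
    (h : BasepointLSP X) : AlmostConvex X :=
  basepointLSP_almostConvex_general X hgen h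

end LoopShortening
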